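/- Let α > 2, θ > 0, R > 0, and let M > 2/α be a real number. Let W and H be independent random variables, W distributed according to the gamma distribution with shape M and rate 1, and H exponentially distributed with rate 1. Then ∫_{ℝ²} ℙ( W·‖x‖^α ≤ H·θ·R^α ) dx = π θ^{2/α} R² · Γ(M − 2/α) Γ(1 + 2/α) / Γ(M). -/

import Mathlib

/-!
By Tonelli, integrating the outage probability over the plane equals averaging, over the fading,
the area of the outage region. For fixed `W = w > 0`, `H = h ≥ 0` that region is the disc
`‖x‖ ≤ (h s / w)^(1/α)` with `s = θ R^α`, of area `π (h s / w)^(2/α)`. Independence splits the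
average into the moments `E[W^(-2/α)] = Γ(M - 2/α)/Γ(M)` and `E[H^(2/α)] = Γ(1 + 2/α)` of
gamma laws.
-/

open MeasureTheory ProbabilityTheory Real Set
open scoped ENNReal

lemma ae_pos_gammaMeasure (a r : ℝ) : ∀ᵐ x ∂gammaMeasure a r, 0 < x := by
  rw [ae_iff]
  simp only [not_lt]
  change gammaMeasure a r (Iic 0) = 0
  rw [gammaMeasure, withDensity_apply _ measurableSet_Iic, setLIntegral_congr Iio_ae_eq_Iic.symm,
    lintegral_gammaPDF_of_nonpos le_rfl]

lemma ae_pos_of_map_eq_gammaMeasure {Ω : Type*} [MeasurableSpace Ω] {μ : Measure Ω}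
    {X : Ω → ℝ} {a r : ℝ} (hX : Measurable X) (hmap : μ.map X = gammaMeasure a r) :
    ∀ᵐ ω ∂μ, 0 < X ω :=
  ae_of_ae_map hX.aemeasurable (hmap ▸ ae_pos_gammaMeasure a r)

lemma lintegral_rpow_gammaMeasure {a r p : ℝ} (ha : 0 < a) (hr : 0 < r) (hap : 0 < a + p) :
    ∫⁻ x, ENNReal.ofReal (x ^ p) ∂gammaMeasure a r =
      ENNReal.ofReal (Gamma (a + p) / (Gamma a * r ^ p)) := by
  have hΓ := Gamma_pos_of_pos ha
  have hdensity : ∀ x ∈ Ioi (0 : ℝ), (gammaPDF a r * fun x => ENNReal.ofReal (x ^ p)) x =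
      ENNReal.ofReal (r ^ a / Gamma a * (x ^ (a + p - 1) * exp (-(r * x)))) := by
    intro x (hx : 0 < x)
    rw [Pi.mul_apply, gammaPDF_of_nonneg hx.le, ← ENNReal.ofReal_mul (by positivity),
      show a + p - 1 = a - 1 + p by ring, rpow_add hx]
    ring_nf
  rw [← Measure.restrict_eq_self_of_ae_mem (s := Ioi 0) (ae_pos_gammaMeasure a r), gammaMeasure,
    restrict_withDensity measurableSet_Ioi,
    lintegral_withDensity_eq_lintegral_mul _
      (show Measurable (gammaPDF a r) from (measurable_gammaPDFReal a r).ennreal_ofReal)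
      (show Measurable fun x : ℝ => ENNReal.ofReal (x ^ p) by fun_prop),
    setLIntegral_congr_fun measurableSet_Ioi hdensity,
    ← ofReal_integral_eq_lintegral_ofReal, integral_const_mul,
    integral_rpow_mul_exp_neg_mul_Ioi hap hr]
  · congr 1
    rw [div_rpow zero_le_one hr.le, one_rpow, rpow_add hr]
    field_simp
  · refine (Integrable.of_integral_ne_zero ?_).const_mul _
    rw [integral_rpow_mul_exp_neg_mul_Ioi hap hr]
    positivity
  · exact (ae_restrict_iff' measurableSet_Ioi).mpr (ae_of_all _ fun x (hx : 0 < x) => by positivity)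

lemma volume_setOf_norm_rpow_le {α c : ℝ} (hα : 0 < α) (hc : 0 ≤ c) :
    volume {x : EuclideanSpace ℝ (Fin 2) | ‖x‖ ^ α ≤ c} = ENNReal.ofReal (π * c ^ (2 / α)) := by
  have hball : {x : EuclideanSpace ℝ (Fin 2) | ‖x‖ ^ α ≤ c} = Metric.closedBall 0 (c ^ α⁻¹) := by
    ext x
    rw [mem_ofPred_eq, mem_closedBall_zero_iff, le_rpow_inv_iff_of_pos (norm_nonneg x) hc hα]
  rw [hball, EuclideanSpace.volume_closedBall_fin_two, ← ENNReal.ofReal_pow (by positivity),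
    ← ENNReal.ofReal_mul (by positivity), ← rpow_natCast, ← rpow_mul hc, mul_comm,
    div_eq_inv_mul, Nat.cast_ofNat]

lemma measurableSet_setOf_mul_norm_rpow_le {Ω E : Type*} [MeasurableSpace Ω]
    [NormedAddCommGroup E] [MeasurableSpace E] [OpensMeasurableSpace E]
    {W H : Ω → ℝ} (hW : Measurable W) (hH : Measurable H) (α s : ℝ) :
    MeasurableSet {q : E × Ω | W q.2 * ‖q.1‖ ^ α ≤ H q.2 * s} :=
  measurableSet_le (by fun_prop) (by fun_prop)

lemma volume_setOf_mul_norm_rpow_le {α w h s : ℝ} (hα : 0 < α) (hw : 0 < w) (hh : 0 ≤ h)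
    (hs : 0 ≤ s) :
    volume {x : EuclideanSpace ℝ (Fin 2) | w * ‖x‖ ^ α ≤ h * s} =
      ENNReal.ofReal (π * s ^ (2 / α)) *
        (ENNReal.ofReal (w ^ (-(2 / α))) * ENNReal.ofReal (h ^ (2 / α))) := by
  simp_rw [← le_div_iff₀' hw]
  rw [volume_setOf_norm_rpow_le hα (by positivity), ← ENNReal.ofReal_mul (by positivity),
    ← ENNReal.ofReal_mul (by positivity), div_rpow (by positivity) hw.le, mul_rpow hh hs,
    rpow_neg hw.le]
  ring_nf

lemma lintegral_measure_setOf_mul_norm_rpow_le {Ω : Type*} [MeasurableSpace Ω]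
    (μ : Measure Ω) [SFinite μ] {W H : Ω → ℝ} (hW : Measurable W) (hH : Measurable H)
    (hWpos : ∀ᵐ ω ∂μ, 0 < W ω) (hHnonneg : ∀ᵐ ω ∂μ, 0 ≤ H ω) {α s : ℝ} (hα : 0 < α)
    (hs : 0 ≤ s) :
    ∫⁻ x : EuclideanSpace ℝ (Fin 2), μ {ω | W ω * ‖x‖ ^ α ≤ H ω * s} =
      ENNReal.ofReal (π * s ^ (2 / α)) *
        ∫⁻ ω, ENNReal.ofReal (W ω ^ (-(2 / α))) * ENNReal.ofReal (H ω ^ (2 / α)) ∂μ := by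
  have hS := measurableSet_setOf_mul_norm_rpow_le (E := EuclideanSpace ℝ (Fin 2)) hW hH α s
  calc _ = (volume.prod μ) {q | W q.2 * ‖q.1‖ ^ α ≤ H q.2 * s} := (Measure.prod_apply hS).symm
    _ = ∫⁻ ω, volume {x : EuclideanSpace ℝ (Fin 2) | W ω * ‖x‖ ^ α ≤ H ω * s} ∂μ :=
      Measure.prod_apply_symm hS
    _ = _ := by
      rw [← lintegral_const_mul _ (by fun_prop)]
      refine lintegral_congr_ae ?_
      filter_upwards [hWpos, hHnonneg] with ω hw hh
      exact volume_setOf_mul_norm_rpow_le hα hw hh hs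

lemma lintegral_comp_mul_comp_of_indepFun {Ω α β : Type*} [MeasurableSpace Ω] [MeasurableSpace α]
    [MeasurableSpace β] {μ : Measure Ω} {X : Ω → α} {Y : Ω → β} (hX : Measurable X)
    (hY : Measurable Y) (hXY : IndepFun X Y μ) {f : α → ℝ≥0∞} {g : β → ℝ≥0∞}
    (hf : Measurable f) (hg : Measurable g) :
    ∫⁻ ω, f (X ω) * g (Y ω) ∂μ = (∫⁻ x, f x ∂μ.map X) * ∫⁻ y, g y ∂μ.map Y := by
  rw [lintegral_map hf hX, lintegral_map hg hY]
  exact lintegral_mul_eq_lintegral_mul_lintegral_of_indepFun (hf.comp hX) (hg.comp hY)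
    (hXY.comp hf hg)

/-- Spatial contention parameter for Poisson ALOHA with Rayleigh fading and receive
beamforming with `M` antennas (equation (15)): if `W` is Gamma(M, 1) (χ² with 2M degrees of
freedom) and `H` is exponential with rate 1, independent, then
`∫_{ℝ²} ℙ(W ‖x‖^α ≤ H θ R^α) dx = π θ^(2/α) R² Γ(M - 2/α) Γ(1 + 2/α) / Γ(M)`. -/
theorem gamma_aloha_beamforming (α θ R M : ℝ) (hα : 2 < α) (hθ : 0 < θ) (hR : 0 < R)
    (hM : 2 / α < M)
    {Ω : Type*} [MeasurableSpace Ω] (μ : Measure Ω) [IsProbabilityMeasure μ]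
    (W H : Ω → ℝ) (hWmeas : Measurable W) (hHmeas : Measurable H)
    (hindep : IndepFun W H μ)
    (hW : Measure.map W μ = gammaMeasure M 1)
    (hH : Measure.map H μ = expMeasure 1) :
    ∫ x : EuclideanSpace ℝ (Fin 2),
        (μ {ω | W ω * ‖x‖ ^ α ≤ H ω * (θ * R ^ α)}).toReal
      = π * θ ^ (2 / α) * R ^ 2 * (Gamma (M - 2 / α) * Gamma (1 + 2 / α)) / Gamma M := by
  have hα0 : 0 < α := by linarith
  have hp : 0 < 2 / α := by positivity
  have hM0 : 0 < M := hp.trans hM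
  have hs : 0 ≤ θ * R ^ α := by positivity
  have hmoments : ∫⁻ ω, ENNReal.ofReal (W ω ^ (-(2 / α))) * ENNReal.ofReal (H ω ^ (2 / α)) ∂μ =
      ENNReal.ofReal (Gamma (M - 2 / α) / Gamma M) * ENNReal.ofReal (Gamma (1 + 2 / α)) := by
    rw [lintegral_comp_mul_comp_of_indepFun hWmeas hHmeas hindep
        (f := fun w => ENNReal.ofReal (w ^ (-(2 / α)))) (g := fun h => ENNReal.ofReal (h ^ (2 / α)))
        (by fun_prop) (by fun_prop),
      hW, hH, expMeasure, lintegral_rpow_gammaMeasure hM0 one_pos (by linarith),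
      lintegral_rpow_gammaMeasure one_pos one_pos (by linarith)]
    simp only [one_rpow, mul_one, Gamma_one, div_one, ← sub_eq_add_neg]
  have hmeas : Measurable fun x : EuclideanSpace ℝ (Fin 2) =>
      μ {ω | W ω * ‖x‖ ^ α ≤ H ω * (θ * R ^ α)} :=
    measurable_measure_prodMk_left (measurableSet_setOf_mul_norm_rpow_le hWmeas hHmeas α _)
  rw [integral_toReal hmeas.aemeasurable (ae_of_all _ fun _ => measure_lt_top _ _),
    lintegral_measure_setOf_mul_norm_rpow_le μ hWmeas hHmeas
      (ae_pos_of_map_eq_gammaMeasure hWmeas hW)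
      ((ae_pos_of_map_eq_gammaMeasure hHmeas hH).mono fun _ => le_of_lt) hα0 hs, hmoments,
    ENNReal.toReal_mul, ENNReal.toReal_mul, ENNReal.toReal_ofReal (by positivity),
    ENNReal.toReal_ofReal (by positivity), ENNReal.toReal_ofReal (by positivity),
    mul_rpow hθ.le (by positivity), ← rpow_mul hR.le, mul_div_cancel₀ _ hα0.ne', rpow_two]
  ring
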